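/- arXiv:1106.1526 — 2 statements merged into one kernel-verified Lean document; each statement's English description precedes it below -/
import Mathlib

section
/- Let 𝓛 be a nonempty class of d-dimensional closed convex sets in ℝ^d such that for every L ∈ 𝓛 the set rec(L) is a linear space, let M := ℝ^d \ ⋃_{L∈𝓛} int(L), and let K be a bounded line-free closed convex set in ℝ^d (i.e., a compact convex set). Then R_𝓛^i(K) converges to conv(K ∩ M) with respect to the Hausdorff distance, as i → ∞. -/
/-!
The iterates `R_𝓛^i(K)` form a decreasing sequence of compact convex sets, all containing
`conv(K ∩ M)`, so they converge in the Hausdorff metric to their intersection `K∞`.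
Taking convex hulls commutes with decreasing intersections of compact sets, hence `K∞` is a
fixed point of every reduction: `K∞ = conv(K∞ \ int L)` for `L ∈ 𝓛`. An extreme point of a set
of the form `conv(A)` lies in `A`, so no extreme point of `K∞` lies in any `int L`, and
Krein–Milman gives `K∞ ⊆ conv(K ∩ M)`.
-/

open Set Pointwise MeasureTheory ENNReal

noncomputable section

variable {E : Type*}

def lred [AddCommGroup E] [Module ℝ E] [TopologicalSpace E] (L K : Set E) : Set E :=
  convexHull ℝ (K \ interior L)

def lclo [AddCommGroup E] [Module ℝ E] [TopologicalSpace E] (𝓛 : Set (Set E)) (K : Set E) : Set E :=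
  ⋂ L ∈ 𝓛, lred L K

def lcloIter [AddCommGroup E] [Module ℝ E] [TopologicalSpace E] (𝓛 : Set (Set E)) : ℕ → Set E → Set E
  | 0, K => K
  | (i+1), K => lclo 𝓛 (lcloIter 𝓛 i K)

def recCone [AddCommGroup E] [Module ℝ E] (K : Set E) : Set E :=
  {y | ∀ x ∈ K, ∀ t : ℝ, 0 ≤ t → x + t • y ∈ K}

def linealSp [AddCommGroup E] [Module ℝ E] (K : Set E) : Set E :=
  {y | ∀ x ∈ K, ∀ t : ℝ, x + t • y ∈ K}

def LineFree [AddCommGroup E] [Module ℝ E] (K : Set E) : Prop :=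
  ∀ x v : E, v ≠ 0 → ¬ (∀ t : ℝ, x + t • v ∈ K)

def setDim [AddCommGroup E] [Module ℝ E] (s : Set E) : ℕ :=
  Module.finrank ℝ (vectorSpan ℝ s)

def IsFaceOf [AddCommGroup E] [Module ℝ E] (K F : Set E) : Prop :=
  Convex ℝ F ∧ IsExtreme ℝ K F

abbrev Euc (d : ℕ) := EuclideanSpace ℝ (Fin d)

def latticePts (d : ℕ) : Set (Euc d) := {x | ∀ i, ∃ z : ℤ, x i = (z : ℝ)}

def IsRatPolyhedron (d : ℕ) (P : Set (Euc d)) : Prop :=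
  ∃ (n : ℕ) (a : Fin n → Fin d → ℚ) (b : Fin n → ℚ), (∀ i, a i ≠ 0) ∧
    P = {x | ∀ i, ∑ j, (a i j : ℝ) * x j ≤ (b i : ℝ)}

def IsPolyhedron (d : ℕ) (P : Set (Euc d)) : Prop :=
  ∃ (n : ℕ) (a : Fin n → Euc d) (b : Fin n → ℝ), (∀ i, a i ≠ 0) ∧
    P = {x | ∀ i, (inner ℝ (a i) x : ℝ) ≤ b i}

def IsFacetOf (d : ℕ) (L F : Set (Euc d)) : Prop :=
  IsFaceOf L F ∧ setDim F + 1 = d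

def IsOuterNormalOf (d : ℕ) (L F : Set (Euc d)) (u : Euc d) : Prop :=
  F = {x | x ∈ L ∧ ∀ y ∈ L, (inner ℝ u y : ℝ) ≤ inner ℝ u x}

def primFacetNormals (d : ℕ) (L : Set (Euc d)) : Set (Euc d) :=
  {u | (∃ z : Fin d → ℤ, (∀ i, u i = (z i : ℝ)) ∧ Finset.univ.gcd z = 1) ∧
    ∃ F, IsFacetOf d L F ∧ IsOuterNormalOf d L F u}

def MaxFacetWidthLE (d : ℕ) (L : Set (Euc d)) (c : ℝ) : Prop :=
  ∀ u ∈ primFacetNormals d L, ∀ x ∈ L, ∀ y ∈ L, (inner ℝ u x : ℝ) - inner ℝ u y ≤ c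

open Filter Topology Metric

theorem tendsto_hausdorffEDist_iInter_of_antitone {X : Type*} [EMetricSpace X] {C : ℕ → Set X}
    (hC : Antitone C) (hCc : ∀ n, IsCompact (C n)) :
    Tendsto (fun n => hausdorffEDist (C n) (⋂ i, C i)) atTop (𝓝 0) := by
  rw [ENNReal.tendsto_atTop_zero]
  intro ε hε
  obtain ⟨N, hN⟩ := exists_subset_nhds_of_isCompact hC.directed_ge hCc fun y hy =>
    (isOpen_lt continuous_infEDist continuous_const).mem_nhds
      (show infEDist y _ < ε by rwa [infEDist_zero_of_mem hy])
  exact ⟨N, fun n hn => hausdorffEDist_le_of_infEDist (fun x hx => (hN (hC hn hx)).le)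
    fun x hx => (infEDist_zero_of_mem (mem_iInter.1 hx n)).trans_le bot_le⟩

theorem disjoint_extremePoints_of_subset_convexHull_diff {𝕜 : Type*} [Field 𝕜] [LinearOrder 𝕜]
    [IsStrictOrderedRing 𝕜] [AddCommGroup E] [Module 𝕜 E] {A S : Set E} (hA : Convex 𝕜 A)
    (h : A ⊆ convexHull 𝕜 (A \ S)) : Disjoint (A.extremePoints 𝕜) S := by
  refine disjoint_left.2 fun x hx hxS => ?_
  have hx' : x ∈ (convexHull 𝕜 (A \ S)).extremePoints 𝕜 :=
    inter_extremePoints_subset_extremePoints_of_subset (convexHull_min sdiff_subset hA)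
      ⟨h hx.1, hx⟩
  exact (extremePoints_convexHull_subset hx').2 hxS

section FiniteDimensional

variable [NormedAddCommGroup E] [NormedSpace ℝ E] [FiniteDimensional ℝ E]

-- Carathéodory: a point of the hull is a convex combination of at most `finrank + 1` points.
theorem convexHull_eq_iUnion_image_stdSimplex (s : Set E) :
    convexHull ℝ s = ⋃ m : Fin (Module.finrank ℝ E + 2),
      (fun p : (Fin m → ℝ) × (Fin m → E) => ∑ i, p.1 i • p.2 i) ''
        (stdSimplex ℝ (Fin m) ×ˢ univ.pi fun _ => s) := by
  refine Subset.antisymm (fun x hx => ?_) (iUnion_subset fun m => ?_)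
  · obtain ⟨ι, _, z, w, hzs, hind, hw₀, hw₁, rfl⟩ := eq_pos_convex_span_of_mem_convexHull hx
    have hcard : Fintype.card ι < Module.finrank ℝ E + 2 :=
      Nat.lt_succ_of_le (hind.card_le_finrank_succ.trans (by gcongr; exact Submodule.finrank_le _))
    let e := Fintype.equivFin ι
    refine mem_iUnion.2 ⟨⟨_, hcard⟩, (w ∘ e.symm, z ∘ e.symm),
      ⟨⟨fun i => (hw₀ _).le, ?_⟩, fun i _ => hzs (mem_range_self _)⟩, ?_⟩
    · rw [← hw₁]; exact e.symm.sum_comp w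
    · exact e.symm.sum_comp fun i => w i • z i
  · rintro _ ⟨⟨w, z⟩, ⟨hw, hz⟩, rfl⟩
    exact (convex_convexHull ℝ s).sum_mem (fun i _ => hw.1 i) hw.2
      fun i _ => subset_convexHull ℝ s (hz i (mem_univ i))

theorem IsCompact.convexHull {s : Set E} (hs : IsCompact s) : IsCompact (convexHull ℝ s) := by
  rw [convexHull_eq_iUnion_image_stdSimplex]
  exact isCompact_iUnion fun m =>
    ((isCompact_stdSimplex ℝ _).prod (isCompact_univ_pi fun _ => hs)).image (by fun_prop)

theorem iInter_convexHull_subset_convexHull_iInter {C : ℕ → Set E} (hC : Antitone C)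
    (hCc : ∀ n, IsCompact (C n)) : ⋂ n, convexHull ℝ (C n) ⊆ convexHull ℝ (⋂ n, C n) := by
  have hA : IsCompact (⋂ n, C n) :=
    (hCc 0).of_isClosed_subset (isClosed_iInter fun n => (hCc n).isClosed) (iInter_subset _ 0)
  intro x hx
  rw [← hA.convexHull.isClosed.closure_eq, Metric.mem_closure_iff]
  intro δ hδ
  obtain ⟨N, hN⟩ := exists_subset_nhds_of_isCompact hC.directed_ge hCc fun y hy =>
    isOpen_thickening.mem_nhds (self_subset_thickening hδ _ hy)
  have hNδ : convexHull ℝ (C N) ⊆ thickening δ (convexHull ℝ (⋂ n, C n)) :=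
    convexHull_min (hN.trans (thickening_subset_of_subset δ (subset_convexHull ℝ _)))
      ((convex_convexHull ℝ _).thickening δ)
  exact mem_thickening_iff.1 (hNδ (mem_iInter.1 hx N))

end FiniteDimensional

section LClosure

variable [AddCommGroup E] [Module ℝ E] [TopologicalSpace E] {𝓛 : Set (Set E)} {L K : Set E}

theorem lred_subset (hK : Convex ℝ K) : lred L K ⊆ K :=
  convexHull_min sdiff_subset hK

theorem lclo_subset (hL : L ∈ 𝓛) (hK : Convex ℝ K) : lclo 𝓛 K ⊆ K :=
  (biInter_subset_of_mem hL).trans (lred_subset hK)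

theorem convexHull_subset_lclo {T : Set E} (hTK : T ⊆ K)
    (hT : Disjoint T (⋃ L ∈ 𝓛, interior L)) : convexHull ℝ T ⊆ lclo 𝓛 K :=
  subset_iInter₂ fun _ hL =>
    convexHull_mono (subset_sdiff.2 ⟨hTK, hT.mono_right (subset_biUnion_of_mem hL)⟩)

theorem convex_lcloIter (hK : Convex ℝ K) : ∀ i, Convex ℝ (lcloIter 𝓛 i K)
  | 0 => hK
  | _ + 1 => convex_iInter₂ fun _ _ => convex_convexHull ℝ _

theorem antitone_lcloIter (h𝓛 : 𝓛.Nonempty) (hK : Convex ℝ K) :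
    Antitone fun i => lcloIter 𝓛 i K :=
  antitone_nat_of_succ_le fun i => lclo_subset h𝓛.some_mem (convex_lcloIter hK i)

theorem convexHull_inter_compl_subset_lcloIter (hK : Convex ℝ K) :
    ∀ i, convexHull ℝ (K ∩ (⋃ L ∈ 𝓛, interior L)ᶜ) ⊆ lcloIter 𝓛 i K
  | 0 => convexHull_min inter_subset_left hK
  | i + 1 => convexHull_subset_lclo
      ((subset_convexHull ℝ _).trans (convexHull_inter_compl_subset_lcloIter hK i))
      (disjoint_compl_left.mono_left inter_subset_right)

end LClosure

section LClosureCompact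

variable [NormedAddCommGroup E] [NormedSpace ℝ E] [FiniteDimensional ℝ E]
  {𝓛 : Set (Set E)} {L K : Set E}

theorem IsCompact.lred (hK : IsCompact K) : IsCompact (lred L K) :=
  (hK.diff isOpen_interior).convexHull

theorem IsCompact.lclo (hL : L ∈ 𝓛) (hK : IsCompact K) : IsCompact (lclo 𝓛 K) :=
  hK.lred.of_isClosed_subset (isClosed_biInter fun _ _ => hK.lred.isClosed)
    (biInter_subset_of_mem hL)

theorem isCompact_lcloIter (h𝓛 : 𝓛.Nonempty) (hK : IsCompact K) :
    ∀ i, IsCompact (lcloIter 𝓛 i K)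
  | 0 => hK
  | i + 1 => (isCompact_lcloIter h𝓛 hK i).lclo h𝓛.some_mem

theorem iInter_lcloIter_subset_lred (h𝓛 : 𝓛.Nonempty) (hK : IsCompact K) (hKc : Convex ℝ K)
    (hL : L ∈ 𝓛) : ⋂ i, lcloIter 𝓛 i K ⊆ lred L (⋂ i, lcloIter 𝓛 i K) :=
  calc ⋂ i, lcloIter 𝓛 i K
      ⊆ ⋂ i, lred L (lcloIter 𝓛 i K) :=
        subset_iInter fun i => (iInter_subset _ (i + 1)).trans (biInter_subset_of_mem hL)
    _ ⊆ convexHull ℝ (⋂ i, lcloIter 𝓛 i K \ interior L) :=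
        iInter_convexHull_subset_convexHull_iInter
          (fun _ _ hij => sdiff_subset_sdiff_left (antitone_lcloIter h𝓛 hKc hij))
          fun i => (isCompact_lcloIter h𝓛 hK i).diff isOpen_interior
    _ = lred L (⋂ i, lcloIter 𝓛 i K) := congrArg (convexHull ℝ) (iInter_inter _ _).symm

theorem iInter_lcloIter_eq_convexHull (h𝓛 : 𝓛.Nonempty) (hK : IsCompact K)
    (hKc : Convex ℝ K) :
    ⋂ i, lcloIter 𝓛 i K = convexHull ℝ (K ∩ (⋃ L ∈ 𝓛, interior L)ᶜ) := by
  set K' := ⋂ i, lcloIter 𝓛 i K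
  have hK' : IsCompact K' := (isCompact_lcloIter h𝓛 hK 0).of_isClosed_subset
    (isClosed_iInter fun i => (isCompact_lcloIter h𝓛 hK i).isClosed) (iInter_subset _ 0)
  have hK'c : Convex ℝ K' := convex_iInter (convex_lcloIter hKc)
  have hext : K'.extremePoints ℝ ⊆ K ∩ (⋃ L ∈ 𝓛, interior L)ᶜ := fun x hx =>
    ⟨iInter_subset _ 0 hx.1, by
      simp only [mem_compl_iff, mem_iUnion₂, not_exists]
      exact fun L hL => disjoint_left.1 (disjoint_extremePoints_of_subset_convexHull_diff hK'c
        (iInter_lcloIter_subset_lred h𝓛 hK hKc hL)) hx⟩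
  have hKM : IsCompact (K ∩ (⋃ L ∈ 𝓛, interior L)ᶜ) :=
    hK.inter_right (isOpen_biUnion fun _ _ => isOpen_interior).isClosed_compl
  refine Subset.antisymm ?_ (subset_iInter (convexHull_inter_compl_subset_lcloIter hKc))
  calc K' = closure (convexHull ℝ (K'.extremePoints ℝ)) :=
        (closure_convexHull_extremePoints hK' hK'c).symm
    _ ⊆ closure (convexHull ℝ (K ∩ (⋃ L ∈ 𝓛, interior L)ᶜ)) :=
        closure_mono (convexHull_mono hext)
    _ = _ := hKM.convexHull.isClosed.closure_eq

end LClosureCompact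

open Filter in
theorem stmt10_general (d : ℕ) (𝓛 : Set (Set (Euc d))) (h𝓛ne : 𝓛.Nonempty)
    (M : Set (Euc d)) (hM : M = univ \ ⋃ L ∈ 𝓛, interior L)
    (K : Set (Euc d)) (hKcl : IsClosed K) (hKcv : Convex ℝ K)
    (hKb : Bornology.IsBounded K) :
    Tendsto (fun i : ℕ => EMetric.hausdorffEdist (lcloIter 𝓛 i K) (convexHull ℝ (K ∩ M)))
      atTop (nhds 0) := by
  have hK : IsCompact K := isCompact_of_isClosed_isBounded hKcl hKb
  rw [hM, ← compl_eq_univ_sdiff, ← iInter_lcloIter_eq_convexHull h𝓛ne hK hKcv]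
  exact tendsto_hausdorffEDist_iInter_of_antitone (antitone_lcloIter h𝓛ne hKcv)
    (isCompact_lcloIter h𝓛ne hK)

open Filter in
/-- Corollary: Hausdorff convergence of iterated 𝓛-closures.
Let `𝓛` be a nonempty class of `d`-dimensional closed convex sets in `ℝ^d` whose
recession cones are linear spaces, `M := ℝ^d \ ⋃_{L ∈ 𝓛} int L`, and let `K` be a
bounded line-free closed convex set. Then `R_𝓛^i(K)` converges to `conv(K ∩ M)` in the
Hausdorff distance as `i → ∞`. -/
theorem stmt10 (d : ℕ) (𝓛 : Set (Set (Euc d))) (h𝓛ne : 𝓛.Nonempty)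
    (h𝓛 : ∀ L ∈ 𝓛, IsClosed L ∧ Convex ℝ L ∧ setDim L = d ∧
      ∃ W : Submodule ℝ (Euc d), recCone L = (W : Set (Euc d)))
    (M : Set (Euc d)) (hM : M = univ \ ⋃ L ∈ 𝓛, interior L)
    (K : Set (Euc d)) (hKcl : IsClosed K) (hKcv : Convex ℝ K)
    (hKlf : LineFree K) (hKb : Bornology.IsBounded K) :
    Tendsto (fun i : ℕ => EMetric.hausdorffEdist (lcloIter 𝓛 i K) (convexHull ℝ (K ∩ M)))
      atTop (nhds 0) :=
  stmt10_general d 𝓛 h𝓛ne M hM K hKcl hKcv hKb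
end
end

section
/- Let L be a d-dimensional rational polyhedron in ℝ^d with maxfw(L) < ∞ and let p ∈ ℚ^d ∩ int(L). Suppose k, ℓ, m ∈ ℕ satisfy: (a) maxfw(L) ≤ k; (b) for every facet F of L one has (ℓ·aff(F)) ∩ ℤ^d ≠ ∅; (c) m·p ∈ ℤ^d. Then for every z ∈ ℤ^d, the value (k·ℓ·m)! · ‖z‖_{L−p} is a nonnegative integer, where ‖·‖_{L−p} is the gauge function of L−p. -/
open Set Pointwise MeasureTheory ENNReal

noncomputable section

variable {E : Type*}

/-!
Write `L = {x | ⟪aᵢ, x⟫ ≤ bᵢ}` irredundantly, with primitive integer normals `aᵢ`. Then `L - p` is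
cut out by `⟪aᵢ, x⟫ ≤ βᵢ := bᵢ - ⟪aᵢ, p⟫`, with `βᵢ > 0`, and its gauge at `z` is either `0` or
`⟪aᵢ, z⟫ / βᵢ` for some `i`. Irredundancy makes `aᵢ` the outer normal of a facet, so `βᵢ ≤ k` by (a),
and `ℓ m βᵢ` is a positive integer by (b) and (c). As `⟪aᵢ, z⟫` is an integer, `(kℓm)!` clears the
denominator `ℓ m βᵢ`.
-/

open RealInnerProductSpace Filter Topology

section InnerProductSpace

variable {E : Type*} [NormedAddCommGroup E] [InnerProductSpace ℝ E] {u p w : E} {c : ℝ}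

theorem inner_lt_of_mem_interior {s : Set E} (hu : u ≠ 0) (hs : ∀ x ∈ s, ⟪u, x⟫ ≤ c)
    (hp : p ∈ interior s) : ⟪u, p⟫ < c := by
  have hline : Tendsto (fun t : ℝ => p + t • u) (𝓝[>] 0) (𝓝 p) := by
    have : Continuous fun t : ℝ => p + t • u := by fun_prop
    simpa using this.tendsto 0 |>.mono_left nhdsWithin_le_nhds
  obtain ⟨t, hts, ht⟩ :=
    ((hline.eventually (mem_interior_iff_mem_nhds.1 hp)).and self_mem_nhdsWithin).exists
  have hle := hs _ hts
  rw [inner_add_right, real_inner_smul_right, real_inner_self_eq_norm_sq] at hle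
  have : 0 < t * ‖u‖ ^ 2 := mul_pos ht (by positivity)
  linarith

theorem vectorSpan_le_orthogonal {S : Set E} (hS : ∀ x ∈ S, ⟪u, x⟫ = c) :
    vectorSpan ℝ S ≤ (ℝ ∙ u)ᗮ := by
  rw [vectorSpan_def, Submodule.span_le]
  rintro _ ⟨x, hx, y, hy, rfl⟩
  simp [Submodule.mem_orthogonal_singleton_iff_inner_right, inner_sub_right, hS x hx, hS y hy]

theorem inner_eq_of_mem_affineSpan {S : Set E} (hS : ∀ x ∈ S, ⟪u, x⟫ = c) {x : E}
    (hx : x ∈ affineSpan ℝ S) : ⟪u, x⟫ = c := by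
  obtain ⟨y, hy⟩ := (affineSpan_nonempty (k := ℝ)).1 ⟨x, hx⟩
  have hxy := vectorSpan_le_orthogonal hS
    (vsub_mem_vectorSpan_of_mem_affineSpan_of_mem_affineSpan hx (subset_affineSpan ℝ S hy))
  rw [Submodule.mem_orthogonal_singleton_iff_inner_right, vsub_eq_sub, inner_sub_right,
    hS y hy, sub_eq_zero] at hxy
  exact hxy

theorem vectorSpan_eq_orthogonal {S : Set E} (hS : ∀ x ∈ S, ⟪u, x⟫ = c) (hwc : ⟪u, w⟫ = c)
    (hw : ∀ᶠ x in 𝓝 w, ⟪u, x⟫ = c → x ∈ S) : vectorSpan ℝ S = (ℝ ∙ u)ᗮ := by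
  refine le_antisymm (vectorSpan_le_orthogonal hS) fun v hv => ?_
  rw [Submodule.mem_orthogonal_singleton_iff_inner_right] at hv
  have hline : Tendsto (fun t : ℝ => w + t • v) (𝓝[≠] 0) (𝓝 w) := by
    have : Continuous fun t : ℝ => w + t • v := by fun_prop
    simpa using this.tendsto 0 |>.mono_left nhdsWithin_le_nhds
  obtain ⟨t, hwt, ht⟩ := ((hline.eventually hw).and self_mem_nhdsWithin).exists
  have hmem : w + t • v ∈ S := hwt (by rw [inner_add_right, real_inner_smul_right, hv, hwc]; simp)
  have htv : t • v ∈ vectorSpan ℝ S := by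
    simpa using vsub_mem_vectorSpan ℝ hmem (hw.self_of_nhds hwc)
  simpa [smul_smul, inv_mul_cancel₀ (show t ≠ 0 from ht)] using
    Submodule.smul_mem _ t⁻¹ htv

theorem toExposed_innerSL_eq {P : Set E} (hPc : ∀ x ∈ P, ⟪u, x⟫ ≤ c) (hw : w ∈ P)
    (hwc : ⟪u, w⟫ = c) : (innerSL ℝ u).toExposed P = {x ∈ P | ⟪u, x⟫ = c} := by
  ext x
  simp only [ContinuousLinearMap.toExposed, innerSL_apply_apply, Set.mem_ofPred_eq]
  constructor
  · rintro ⟨hx, hmax⟩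
    exact ⟨hx, le_antisymm (hPc x hx) (hwc ▸ hmax w hw)⟩
  · rintro ⟨hx, hxc⟩
    exact ⟨hx, fun y hy => hxc ▸ hPc y hy⟩

end InnerProductSpace

theorem isFacetOf_toExposed_innerSL {d : ℕ} {P : Set (Euc d)} (hP : Convex ℝ P) {u w : Euc d}
    {c : ℝ} (hu : u ≠ 0) (hPc : ∀ x ∈ P, ⟪u, x⟫ ≤ c) (hwc : ⟪u, w⟫ = c)
    (hw : ∀ᶠ x in 𝓝 w, ⟪u, x⟫ = c → x ∈ P) :
    IsFacetOf d P ((innerSL ℝ u).toExposed P) := by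
  have hexp := ContinuousLinearMap.toExposed.isExposed (l := innerSL ℝ u) (A := P)
  refine ⟨⟨hexp.convex hP, hexp.isExtreme⟩, ?_⟩
  have hspan : vectorSpan ℝ ((innerSL ℝ u).toExposed P) = (ℝ ∙ u)ᗮ := by
    rw [toExposed_innerSL_eq hPc (hw.self_of_nhds hwc) hwc]
    exact vectorSpan_eq_orthogonal (fun x hx => hx.2) hwc
      (hw.mono fun x hx hxc => ⟨hx hxc, hxc⟩)
  have hrank := Submodule.finrank_add_finrank_orthogonal (ℝ ∙ u)
  rw [finrank_span_singleton hu, finrank_euclideanSpace_fin] at hrank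
  rw [setDim, hspan]
  omega

theorem isOuterNormalOf_toExposed_innerSL {d : ℕ} (P : Set (Euc d)) (u : Euc d) :
    IsOuterNormalOf d P ((innerSL ℝ u).toExposed P) u :=
  rfl

section Polyhedron

variable {E : Type*} [NormedAddCommGroup E] [InnerProductSpace ℝ E] {ι : Type*}

def polyhedron (a : ι → E) (b : ι → ℝ) : Set E :=
  {x | ∀ i, ⟪a i, x⟫ ≤ b i}

def IsIrredundant (a : ι → E) (b : ι → ℝ) : Prop :=
  ∀ i, ∃ y, (∀ j ≠ i, ⟪a j, y⟫ ≤ b j) ∧ b i < ⟪a i, y⟫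

theorem exists_irredundant_subfamily [Finite ι] (a : ι → E) (b : ι → ℝ) :
    ∃ s : Set ι, polyhedron (fun i : s => a i) (fun i : s => b i) = polyhedron a b ∧
      IsIrredundant (fun i : s => a i) (fun i : s => b i) := by
  set Q : Set ι → Set E := fun s => {x | ∀ i ∈ s, ⟪a i, x⟫ ≤ b i}
  have hQ : ∀ s : Set ι, polyhedron (fun i : s => a i) (fun i : s => b i) = Q s := fun s => by
    ext x; simp [polyhedron, Q]
  have huniv : Q Set.univ = polyhedron a b := by ext x; simp [polyhedron, Q]
  obtain ⟨s, hs, hmin⟩ := wellFounded_lt.has_min {s | Q s = Q Set.univ} ⟨Set.univ, rfl⟩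
  refine ⟨s, by rw [hQ, hs, huniv], ?_⟩
  rintro ⟨i, hi⟩
  have hne : Q (s \ {i}) ≠ Q Set.univ := fun h =>
    hmin _ h (Set.sdiff_subset.ssubset_of_not_subset fun h' => (h' hi).2 rfl)
  obtain ⟨y, hy, hys⟩ : ∃ y ∈ Q (s \ {i}), y ∉ Q s := by
    by_contra! h
    exact hne (hs ▸ Set.Subset.antisymm h fun x hx j hj => hx j hj.1)
  refine ⟨y, fun ⟨j, hj⟩ hji => hy j ⟨hj, fun h => hji (Subtype.ext h)⟩, ?_⟩
  by_contra! hyi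
  refine hys fun j hj => ?_
  by_cases hji : j = i
  · exact hji ▸ hyi
  · exact hy j ⟨hj, hji⟩

variable {a : ι → E} {b : ι → ℝ}

theorem convex_polyhedron : Convex ℝ (polyhedron a b) := by
  have : polyhedron a b = ⋂ i, {x | innerSL ℝ (a i) x ≤ b i} := by
    ext x; simp [polyhedron]
  rw [this]
  exact convex_iInter fun i => convex_halfSpace_le (innerSL ℝ (a i)).isLinear _

theorem polyhedron_sub_singleton (p : E) :
    polyhedron a b - {p} = polyhedron a (fun i => b i - ⟪a i, p⟫) := by
  ext x
  simp only [polyhedron, Set.mem_sub, Set.mem_singleton_iff, Set.mem_ofPred_eq, exists_eq_left]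
  constructor
  · rintro ⟨y, hy, rfl⟩ i
    rw [inner_sub_right]
    linarith [hy i]
  · intro hx
    refine ⟨x + p, fun i => ?_, add_sub_cancel_right x p⟩
    rw [inner_add_right]
    linarith [hx i]

theorem mem_smul_polyhedron {r : ℝ} (hr : 0 < r) {x : E} :
    x ∈ r • polyhedron a b ↔ ∀ i, ⟪a i, x⟫ ≤ r * b i := by
  simp only [mem_smul_set_iff_inv_smul_mem₀ hr.ne', polyhedron, Set.mem_ofPred_eq,
    real_inner_smul_right, inv_mul_le_iff₀ hr]

theorem gauge_polyhedron_eq_zero_or_exists [Finite ι] (hb : ∀ i, 0 < b i) (z : E) :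
    gauge (polyhedron a b) z = 0 ∨
      ∃ i, 0 < ⟪a i, z⟫ ∧ gauge (polyhedron a b) z = ⟪a i, z⟫ / b i := by
  by_cases! hz : ∀ i, ⟪a i, z⟫ ≤ 0
  · refine .inl (le_antisymm (le_of_forall_pos_le_add fun ε hε => ?_) (gauge_nonneg z))
    rw [zero_add]
    exact gauge_le_of_mem hε.le
      ((mem_smul_polyhedron hε).2 fun i => (hz i).trans (mul_pos hε (hb i)).le)
  obtain ⟨i₀, hi₀⟩ := hz
  have : Nonempty ι := ⟨i₀⟩
  obtain ⟨i, hi⟩ := Finite.exists_max fun i => ⟪a i, z⟫ / b i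
  have hpos : 0 < ⟪a i, z⟫ / b i := (div_pos hi₀ (hb i₀)).trans_le (hi i₀)
  have hmem : ∀ r, 0 < r → (z ∈ r • polyhedron a b ↔ ⟪a i, z⟫ / b i ≤ r) := fun r hr => by
    rw [mem_smul_polyhedron hr]
    exact ⟨fun h => (div_le_iff₀ (hb i)).2 (h i),
      fun h j => (div_le_iff₀ (hb j)).1 ((hi j).trans h)⟩
  refine .inr ⟨i, (div_pos_iff_of_pos_right (hb i)).1 hpos,
    le_antisymm (gauge_le_of_mem hpos.le ((hmem _ hpos).2 le_rfl)) ?_⟩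
  rw [gauge_def]
  exact le_csInf ⟨_, hpos, (hmem _ hpos).2 le_rfl⟩ fun r ⟨hr, hzr⟩ => (hmem r hr).1 hzr

theorem exists_inner_eq_and_eventually_mem [Finite ι] {p : E} (hp : ∀ i, ⟪a i, p⟫ < b i) {i : ι}
    {y : E} (hy : ∀ j ≠ i, ⟪a j, y⟫ ≤ b j) (hyi : b i < ⟪a i, y⟫) :
    ∃ w, ⟪a i, w⟫ = b i ∧ ∀ᶠ x in 𝓝 w, ⟪a i, x⟫ = b i → x ∈ polyhedron a b := by
  -- `w := p + t • (y - p)` is where the segment from `p` to `y` crosses `⟪a i, x⟫ = b i`.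
  set t := (b i - ⟪a i, p⟫) / (⟪a i, y⟫ - ⟪a i, p⟫)
  have hden : 0 < ⟪a i, y⟫ - ⟪a i, p⟫ := by linarith [hp i]
  have ht₀ : 0 < t := div_pos (by linarith [hp i]) hden
  have ht₁ : t < 1 := (div_lt_one hden).2 (by linarith)
  have hinner : ∀ j, ⟪a j, p + t • (y - p)⟫ = (1 - t) * ⟪a j, p⟫ + t * ⟪a j, y⟫ := fun j => by
    rw [inner_add_right, real_inner_smul_right, inner_sub_right]; ring
  have hti : t * (⟪a i, y⟫ - ⟪a i, p⟫) = b i - ⟪a i, p⟫ := div_mul_cancel₀ _ hden.ne'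
  refine ⟨p + t • (y - p), by rw [hinner]; linarith, ?_⟩
  have hlt : ∀ᶠ x in 𝓝 (p + t • (y - p)), ∀ j, j ≠ i → ⟪a j, x⟫ < b j := by
    refine eventually_all.2 fun j => ?_
    by_cases hj : j = i
    · exact .of_forall fun _ h => absurd hj h
    have hwj : ⟪a j, p + t • (y - p)⟫ < b j := by
      rw [hinner]
      nlinarith [hp j, hy j hj]
    exact ((continuous_const.inner continuous_id).continuousAt.eventually_lt
      continuousAt_const hwj).mono fun x hx _ => hx
  filter_upwards [hlt] with x hx hxi j
  by_cases hj : j = i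
  · exact hj ▸ hxi.le
  · exact (hx j hj).le

end Polyhedron

theorem exists_facet_of_irredundant {d : ℕ} {ι : Type*} [Finite ι] {a : ι → Euc d}
    {b : ι → ℝ} (ha : ∀ i, a i ≠ 0) (hirr : IsIrredundant a b) {p : Euc d}
    (hp : p ∈ interior (polyhedron a b)) (i : ι) :
    ∃ F, IsFacetOf d (polyhedron a b) F ∧ IsOuterNormalOf d (polyhedron a b) F (a i) ∧
      F.Nonempty ∧ ∀ x ∈ affineSpan ℝ F, ⟪a i, x⟫ = b i := by
  obtain ⟨y, hy, hyi⟩ := hirr i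
  have hpb : ∀ j, ⟪a j, p⟫ < b j := fun j =>
    inner_lt_of_mem_interior (ha j) (fun x (hx : x ∈ polyhedron a b) => hx j) hp
  obtain ⟨w, hwc, hw⟩ := exists_inner_eq_and_eventually_mem hpb hy hyi
  have hPc : ∀ x ∈ polyhedron a b, ⟪a i, x⟫ ≤ b i := fun x hx => hx i
  have hF := toExposed_innerSL_eq hPc (hw.self_of_nhds hwc) hwc
  refine ⟨_, isFacetOf_toExposed_innerSL convex_polyhedron (ha i) hPc hwc hw,
    isOuterNormalOf_toExposed_innerSL _ _, ?_, fun x hx => inner_eq_of_mem_affineSpan ?_ hx⟩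
  · exact ⟨w, hF ▸ ⟨hw.self_of_nhds hwc, hwc⟩⟩
  · rw [hF]
    exact fun x hx => hx.2

section Lattice

variable {d : ℕ}

def IsPrimitiveLatticeVec (u : Euc d) : Prop :=
  ∃ z : Fin d → ℤ, (∀ i, u i = (z i : ℝ)) ∧ Finset.univ.gcd z = 1

theorem IsPrimitiveLatticeVec.mem_latticePts {u : Euc d} (hu : IsPrimitiveLatticeVec u) :
    u ∈ latticePts d :=
  let ⟨z, hz, _⟩ := hu
  fun i => ⟨z i, hz i⟩

theorem IsPrimitiveLatticeVec.ne_zero {u : Euc d} (hu : IsPrimitiveLatticeVec u) : u ≠ 0 := by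
  rintro rfl
  obtain ⟨z, hz, hgcd⟩ := hu
  have : Finset.univ.gcd z = 0 := Finset.gcd_eq_zero_iff.2 fun i _ => by
    simpa using (hz i).symm
  exact one_ne_zero (hgcd ▸ this)

theorem inner_eq_sum (u x : Euc d) : ⟪u, x⟫ = ∑ j, u j * x j := by
  simp [PiLp.inner_apply, mul_comm]

theorem exists_int_eq_inner {u x : Euc d} (hu : u ∈ latticePts d) (hx : x ∈ latticePts d) :
    ∃ n : ℤ, ⟪u, x⟫ = n := by
  choose f hf using hu
  choose g hg using hx
  exact ⟨∑ j, f j * g j, by simp [inner_eq_sum, hf, hg]⟩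

end Lattice

theorem exists_pos_mul_eq_primitive {n : ℕ} (a : Fin n → ℚ) (ha : a ≠ 0) :
    ∃ (c : ℚ) (v : Fin n → ℤ), 0 < c ∧ (∀ j, (v j : ℚ) = c * a j) ∧ Finset.univ.gcd v = 1 := by
  set N : ℕ := ∏ j, (a j).den
  have hN : 0 < N := Finset.prod_pos fun j _ => (a j).pos
  have hw : ∀ j, ((N / (a j).den * (a j).num : ℤ) : ℚ) = N * a j := fun j => by
    have hdvd : (a j).den ∣ N := Finset.dvd_prod_of_mem _ (Finset.mem_univ j)
    push_cast
    rw [← Rat.mul_den_eq_num, Int.cast_div (by exact_mod_cast hdvd) (by simp)]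
    field_simp
    push_cast
    ring
  set w : Fin n → ℤ := fun j => N / (a j).den * (a j).num
  obtain ⟨j₀, hj₀⟩ := Function.ne_iff.1 ha
  have hwj₀ : w j₀ ≠ 0 := by
    have : (w j₀ : ℚ) ≠ 0 := by rw [hw]; exact mul_ne_zero (by positivity) hj₀
    exact_mod_cast this
  obtain ⟨v, hv, hgcd⟩ := Finset.extract_gcd w ⟨j₀, Finset.mem_univ _⟩
  have hg : 0 < Finset.univ.gcd w := by
    refine lt_of_le_of_ne ?_ (Ne.symm fun h => hwj₀ (Finset.gcd_eq_zero_iff.1 h j₀ (by simp)))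
    rw [← Finset.normalize_gcd, ← Int.abs_eq_normalize]
    exact abs_nonneg _
  refine ⟨N / Finset.univ.gcd w, v, by positivity, fun j => ?_, hgcd⟩
  have hj : ((Finset.univ.gcd w : ℤ) : ℚ) * v j = N * a j := by
    rw [← hw j]; exact_mod_cast (hv j (by simp)).symm
  field_simp
  linarith

theorem IsRatPolyhedron.exists_primitive {d : ℕ} {L : Set (Euc d)} (hL : IsRatPolyhedron d L) :
    ∃ (n : ℕ) (a : Fin n → Euc d) (b : Fin n → ℝ),
      (∀ i, IsPrimitiveLatticeVec (a i)) ∧ L = polyhedron a b := by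
  obtain ⟨n, a, b, ha, rfl⟩ := hL
  choose c v hc hv hgcd using fun i => exists_pos_mul_eq_primitive (a i) (ha i)
  refine ⟨n, fun i => WithLp.toLp 2 fun j => (v i j : ℝ), fun i => c i * b i,
    fun i => ⟨v i, fun j => rfl, hgcd i⟩, ?_⟩
  ext x
  refine forall_congr' fun i => ?_
  have hsum : ⟪WithLp.toLp 2 fun j => (v i j : ℝ), x⟫ = c i * ∑ j, (a i j : ℝ) * x j := by
    rw [inner_eq_sum, Finset.mul_sum]
    refine Finset.sum_congr rfl fun j _ => ?_
    change ((v i j : ℚ) : ℝ) * x j = _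
    rw [hv]
    push_cast
    ring
  rw [hsum, mul_le_mul_iff_right₀ (by exact_mod_cast hc i)]

theorem IsRatPolyhedron.exists_irredundant_primitive {d : ℕ} {L : Set (Euc d)}
    (hL : IsRatPolyhedron d L) :
    ∃ (ι : Type) (_ : Finite ι) (a : ι → Euc d) (b : ι → ℝ),
      (∀ i, IsPrimitiveLatticeVec (a i)) ∧ IsIrredundant a b ∧ L = polyhedron a b := by
  obtain ⟨n, a, b, ha, rfl⟩ := hL.exists_primitive
  obtain ⟨s, hs, hirr⟩ := exists_irredundant_subfamily a b
  exact ⟨s, inferInstance, _, _, fun i => ha i, hirr, hs.symm⟩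

theorem exists_nat_eq_factorial_mul_div {n c : ℕ} {A β : ℝ} {a q : ℤ} (hA : A = a)
    (hq : c * β = q) (hApos : 0 < A) (hβ : 0 < β) (hc : 0 < c) (hle : c * β ≤ n) :
    ∃ N : ℕ, (n.factorial : ℝ) * (A / β) = N := by
  lift a to ℕ using by exact_mod_cast (hA ▸ hApos).le
  lift q to ℕ using by exact_mod_cast (hq ▸ mul_pos (Nat.cast_pos.2 hc) hβ).le
  have hq0 : 0 < q := by exact_mod_cast hq ▸ mul_pos (Nat.cast_pos.2 hc) hβ
  obtain ⟨r, hr⟩ := Nat.dvd_factorial hq0 (by exact_mod_cast hq ▸ hle)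
  refine ⟨r * (c * a), ?_⟩
  rw [hr, hA]
  push_cast at hq ⊢
  rw [← hq]
  field_simp

theorem stmt14_general (d : ℕ) (L : Set (Euc d))
    (hL : IsRatPolyhedron d L)
    (p : Euc d) (hpL : p ∈ interior L)
    (k ℓ m : ℕ) (hℓ : 0 < ℓ) (hm : 0 < m)
    (ha : MaxFacetWidthLE d L (k : ℝ))
    (hb : ∀ F : Set (Euc d), IsFacetOf d L F →
      (((ℓ : ℝ) • (affineSpan ℝ F : Set (Euc d))) ∩ latticePts d).Nonempty)
    (hc : ∀ i, ∃ z : ℤ, (m : ℝ) * p i = (z : ℝ)) :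
    ∀ z ∈ latticePts d, ∃ N : ℕ,
      (Nat.factorial (k * ℓ * m) : ℝ) * gauge (L - {p}) z = (N : ℝ) := by
  obtain ⟨ι, _, a, b, hprim, hirr, rfl⟩ := hL.exists_irredundant_primitive
  have hβ : ∀ i, 0 < b i - ⟪a i, p⟫ := fun i => sub_pos.2 <|
    inner_lt_of_mem_interior (hprim i).ne_zero (fun x (hx : x ∈ polyhedron a b) => hx i) hpL
  intro z hz
  rw [polyhedron_sub_singleton]
  rcases gauge_polyhedron_eq_zero_or_exists (a := a) hβ z with h0 | ⟨i, hzi, hgauge⟩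
  · exact ⟨0, by simp [h0]⟩
  obtain ⟨F, hF, hFn, ⟨w, hwF⟩, hFaff⟩ :=
    exists_facet_of_irredundant (fun i => (hprim i).ne_zero) hirr hpL i
  have hwidth : b i - ⟪a i, p⟫ ≤ k := by
    have := ha (a i) ⟨hprim i, F, hF, hFn⟩ w (hFn ▸ hwF).1 p (interior_subset hpL)
    rwa [hFaff w (subset_affineSpan ℝ F hwF)] at this
  have hlat := (hprim i).mem_latticePts
  obtain ⟨A, hA⟩ := exists_int_eq_inner hlat hz
  obtain ⟨q, hq⟩ : ∃ q : ℤ, ((ℓ * m : ℕ) : ℝ) * (b i - ⟪a i, p⟫) = q := by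
    obtain ⟨_, ⟨y, hy, rfl⟩, hyL⟩ := hb F hF
    obtain ⟨q₁, hq₁⟩ := exists_int_eq_inner hlat hyL
    obtain ⟨q₂, hq₂⟩ := exists_int_eq_inner hlat (show (m : ℝ) • p ∈ latticePts d from hc)
    rw [real_inner_smul_right, hFaff y hy] at hq₁
    rw [real_inner_smul_right] at hq₂
    exact ⟨m * q₁ - ℓ * q₂, by push_cast; rw [← hq₁, ← hq₂]; ring⟩
  rw [hgauge]
  refine exists_nat_eq_factorial_mul_div hA hq hzi (hβ i) (Nat.mul_pos hℓ hm) ?_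
  have := mul_le_mul_of_nonneg_left hwidth (Nat.cast_nonneg (α := ℝ) (ℓ * m))
  push_cast at this ⊢
  linarith

/-- Lemma: integrality of the polar, Part II.
Under the assumptions of Statement 13, for every `z ∈ ℤ^d` the value
`(k·ℓ·m)! · ‖z‖_{L−p}` is a nonnegative integer, where `‖·‖_{L−p}` is the gauge
function of `L − p`. -/
theorem stmt14 (d : ℕ) (L : Set (Euc d))
    (hL : IsRatPolyhedron d L) (hLdim : setDim L = d)
    (hfin : ∀ u ∈ primFacetNormals d L, ∃ c : ℝ, ∀ x ∈ L, ∀ y ∈ L,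
      (inner ℝ u x : ℝ) - inner ℝ u y ≤ c)
    (p : Euc d) (hpQ : ∀ i, ∃ q : ℚ, p i = (q : ℝ)) (hpL : p ∈ interior L)
    (k ℓ m : ℕ) (hk : 0 < k) (hℓ : 0 < ℓ) (hm : 0 < m)
    (ha : MaxFacetWidthLE d L (k : ℝ))
    (hb : ∀ F : Set (Euc d), IsFacetOf d L F →
      (((ℓ : ℝ) • (affineSpan ℝ F : Set (Euc d))) ∩ latticePts d).Nonempty)
    (hc : ∀ i, ∃ z : ℤ, (m : ℝ) * p i = (z : ℝ)) :
    ∀ z ∈ latticePts d, ∃ N : ℕ,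
      (Nat.factorial (k * ℓ * m) : ℝ) * gauge (L - {p}) z = (N : ℝ) :=
  stmt14_general d L hL p hpL k ℓ m hℓ hm ha hb hc
end
end
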